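/- Let g be a positive integer, h > 0, and d ≥ 1 an integer, and let D be the discrete derivative operator of order 2d with periodic boundary conditions on ℂ^{ℤ/gℤ} with grid spacing h. Then the spectral norm of D satisfies ‖D‖ ≤ (Σ_{k=−d}^{d} |c_{d,k}|)/h ≤ 2·(ln d + 1)/h. -/

import Mathlib

open scoped Matrix.Norms.L2Operator

/-- The central finite-difference coefficients `c_{d,k}` of order `2d`:
`c_{d,k} = (-1)^(k+1) · (d!)² / (k·(d-k)!·(d+k)!)` for `k ≠ 0`, and `c_{d,0} = 0`. -/
noncomputable def centralFDCoeff (d : ℕ) (k : ℤ) : ℝ :=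
  if k = 0 then 0
  else (-1 : ℝ) ^ (k + 1) * ((d.factorial : ℝ)) ^ 2 /
    ((k : ℝ) * (((d : ℤ) - k).toNat.factorial : ℝ) * (((d : ℤ) + k).toNat.factorial : ℝ))

/-- The discrete derivative operator of order `2d` with periodic boundary conditions on
`ℂ^{ℤ/gℤ}` with grid spacing `h`:  `D = (1/h)·Σ_x Σ_{k=-d}^{d} c_{d,k}·E_{x-k,x}`. -/
noncomputable def discreteDeriv (g : ℕ) [NeZero g] (h : ℝ) (d : ℕ) :
    Matrix (ZMod g) (ZMod g) ℂ :=
  ((1 / h : ℝ) : ℂ) •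
    ∑ x : ZMod g, ∑ k ∈ Finset.Icc (-(d : ℤ)) (d : ℤ),
      ((centralFDCoeff d k : ℝ) : ℂ) • Matrix.single (x - (k : ZMod g)) x (1 : ℂ)

/-!
`D` is `1/h` times a linear combination, with coefficients `c_{d,k}`, of the cyclic shifts
`x ↦ x + k`, which are permutation matrices and hence have spectral norm at most `1`; the first
bound is the triangle inequality. For the second, `|c_{d,k}| ≤ 1/|k|` because
`(d!)² ≤ (d-k)!·(d+k)!`, which is `C(2d, d+k) ≤ C(2d, d)`; summing over `0 < |k| ≤ d` gives
`2·H_d ≤ 2·(1 + log d)`.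
-/

open Finset
open scoped Nat

theorem Nat.factorial_mul_factorial_le_factorial_sub_mul_factorial_add {d k : ℕ} (hk : k ≤ d) :
    d ! * d ! ≤ (d - k)! * (d + k)! := by
  have hmid := Nat.choose_mul_factorial_mul_factorial (show d ≤ 2 * d by omega)
  have hoff := Nat.choose_mul_factorial_mul_factorial (show d + k ≤ 2 * d by omega)
  rw [show 2 * d - d = d by omega] at hmid
  rw [show 2 * d - (d + k) = d - k by omega] at hoff
  have hle : (2 * d).choose (d + k) ≤ (2 * d).choose d := by
    simpa [Nat.centralBinom_eq_two_mul_choose] using Nat.choose_le_centralBinom (d + k) d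
  refine Nat.le_of_mul_le_mul_left ?_ (Nat.choose_pos (show d ≤ 2 * d by omega))
  calc (2 * d).choose d * (d ! * d !) = (2 * d).choose (d + k) * ((d - k)! * (d + k)!) := by
        rw [← mul_assoc, hmid, ← hoff]; ring
    _ ≤ _ := Nat.mul_le_mul_right _ hle

theorem factorial_mul_factorial_le_factorial_toNat_mul_factorial_toNat {d : ℕ} {k : ℤ}
    (hk : k.natAbs ≤ d) :
    d ! * d ! ≤ ((d : ℤ) - k).toNat ! * ((d : ℤ) + k).toNat ! := by
  obtain ⟨n, rfl | rfl⟩ : ∃ n : ℕ, k = n ∨ k = -n := ⟨k.natAbs, Int.natAbs_eq k⟩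
  · rw [Int.natAbs_natCast] at hk
    rw [show ((d : ℤ) - n).toNat = d - n by omega, show ((d : ℤ) + n).toNat = d + n by omega]
    exact Nat.factorial_mul_factorial_le_factorial_sub_mul_factorial_add hk
  · rw [Int.natAbs_neg, Int.natAbs_natCast] at hk
    rw [show ((d : ℤ) - -n).toNat = d + n by omega, show ((d : ℤ) + -n).toNat = d - n by omega,
      mul_comm ((d + n)!)]
    exact Nat.factorial_mul_factorial_le_factorial_sub_mul_factorial_add hk

-- At `k = 0` the right-hand side is the junk value `0⁻¹ = 0`, matching `centralFDCoeff d 0 = 0`.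
theorem abs_centralFDCoeff_le (d : ℕ) (k : ℤ) (hk : k.natAbs ≤ d) :
    |centralFDCoeff d k| ≤ |(k : ℝ)|⁻¹ := by
  rcases eq_or_ne k 0 with rfl | hk0
  · simp [centralFDCoeff]
  have hfac :
      (d ! : ℝ) ^ 2 ≤ (((d : ℤ) - k).toNat ! : ℝ) * (((d : ℤ) + k).toNat ! : ℝ) := by
    rw [sq]
    exact_mod_cast factorial_mul_factorial_le_factorial_toNat_mul_factorial_toNat hk
  have habs : |centralFDCoeff d k| = |(k : ℝ)|⁻¹ *
      ((d ! : ℝ) ^ 2 / ((((d : ℤ) - k).toNat ! : ℝ) * (((d : ℤ) + k).toNat ! : ℝ))) := by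
    rw [centralFDCoeff, if_neg hk0, abs_div, abs_mul, abs_neg_one_zpow, abs_mul, abs_mul]
    simp only [Nat.abs_cast, abs_pow]
    field_simp
  rw [habs]
  exact mul_le_of_le_one_right (by positivity) (div_le_one_of_le₀ hfac (by positivity))

theorem sum_Icc_neg_abs_inv_eq_two_mul_harmonic (n : ℕ) :
    ∑ k ∈ Icc (-(n : ℤ)) n, |(k : ℝ)|⁻¹ = 2 * harmonic n := by
  induction n with
  | zero => simp
  | succ n ih =>
    have hIcc : Icc (-((n + 1 : ℕ) : ℤ)) (n + 1 : ℕ) =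
        insert (-((n + 1 : ℕ) : ℤ)) (insert ((n + 1 : ℕ) : ℤ) (Icc (-(n : ℤ)) n)) := by
      ext; simp; omega
    rw [hIcc, sum_insert (by simp; omega), sum_insert (by simp), ih, harmonic_succ]
    push_cast
    rw [abs_neg, abs_of_pos (by positivity)]
    ring

theorem Matrix.sum_single_perm_one_eq_permMatrix_inv {n R : Type*} [Fintype n] [DecidableEq n]
    [AddCommMonoidWithOne R] (σ : Equiv.Perm n) :
    ∑ x, Matrix.single (σ x) x (1 : R) = σ⁻¹.permMatrix R := by
  ext i j
  rw [Matrix.sum_apply, sum_eq_single j (fun x _ hx => by simp [hx]) (by simp)]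
  simp [Matrix.single_apply, Equiv.toPEquiv_apply, Equiv.Perm.inv_def, Equiv.eq_symm_apply,
    eq_comm]

theorem Matrix.norm_sum_smul_permMatrix_le {n ι 𝕜 : Type*} [Fintype n] [DecidableEq n]
    [RCLike 𝕜] (s : Finset ι) (a : ι → 𝕜) (σ : ι → Equiv.Perm n) :
    ‖∑ i ∈ s, a i • (σ i).permMatrix 𝕜‖ ≤ ∑ i ∈ s, ‖a i‖ := by
  refine (norm_sum_le _ _).trans (sum_le_sum fun i _ => ?_)
  grw [norm_smul_le, permMatrix_l2_opNorm_le, mul_one]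

theorem discreteDeriv_eq_smul_sum_permMatrix (g : ℕ) [NeZero g] (h : ℝ) (d : ℕ) :
    discreteDeriv g h d = ((1 / h : ℝ) : ℂ) • ∑ k ∈ Icc (-(d : ℤ)) d,
      ((centralFDCoeff d k : ℝ) : ℂ) • (Equiv.addRight (k : ZMod g)).permMatrix ℂ := by
  rw [discreteDeriv, sum_comm]
  congr 1
  refine sum_congr rfl fun k _ => ?_
  rw [← smul_sum]
  exact congrArg _ (Matrix.sum_single_perm_one_eq_permMatrix_inv (Equiv.subRight (k : ZMod g)))

theorem norm_discreteDeriv_le_sum_abs_centralFDCoeff_div (g : ℕ) [NeZero g] (h : ℝ) (d : ℕ) :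
    ‖discreteDeriv g h d‖ ≤ (∑ k ∈ Icc (-(d : ℤ)) d, |centralFDCoeff d k|) / |h| := by
  have hscalar : ‖((1 / h : ℝ) : ℂ)‖ = |h|⁻¹ := by simp
  rw [discreteDeriv_eq_smul_sum_permMatrix, norm_smul, hscalar, div_eq_inv_mul]
  gcongr
  simpa using Matrix.norm_sum_smul_permMatrix_le _ (fun k => ((centralFDCoeff d k : ℝ) : ℂ)) _

theorem sum_abs_centralFDCoeff_le (d : ℕ) :
    ∑ k ∈ Icc (-(d : ℤ)) d, |centralFDCoeff d k| ≤ 2 * (Real.log d + 1) := calc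
  _ ≤ ∑ k ∈ Icc (-(d : ℤ)) d, |(k : ℝ)|⁻¹ :=
    sum_le_sum fun k hk => abs_centralFDCoeff_le d k (by rw [mem_Icc] at hk; omega)
  _ = 2 * harmonic d := sum_Icc_neg_abs_inv_eq_two_mul_harmonic d
  _ ≤ 2 * (Real.log d + 1) := by grw [harmonic_le_one_add_log, add_comm]

theorem discreteDeriv_norm_le_general (g : ℕ) [NeZero g] (h : ℝ) (hh : 0 < h) (d : ℕ) :
    ‖discreteDeriv g h d‖ ≤ (∑ k ∈ Finset.Icc (-(d : ℤ)) (d : ℤ), |centralFDCoeff d k|) / h ∧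
      (∑ k ∈ Finset.Icc (-(d : ℤ)) (d : ℤ), |centralFDCoeff d k|) / h ≤
        2 * (Real.log d + 1) / h := by
  constructor
  · simpa [abs_of_pos hh] using norm_discreteDeriv_le_sum_abs_centralFDCoeff_div g h d
  · gcongr
    exact sum_abs_centralFDCoeff_le d

/-- **Spectral norm bound on the discrete derivative operator**:
`‖D‖ ≤ (Σ_k |c_{d,k}|)/h ≤ 2·(ln d + 1)/h`. -/
theorem discreteDeriv_norm_le (g : ℕ) [NeZero g] (h : ℝ) (hh : 0 < h) (d : ℕ) (hd : 1 ≤ d) :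
    ‖discreteDeriv g h d‖ ≤ (∑ k ∈ Finset.Icc (-(d : ℤ)) (d : ℤ), |centralFDCoeff d k|) / h ∧
      (∑ k ∈ Finset.Icc (-(d : ℤ)) (d : ℤ), |centralFDCoeff d k|) / h ≤
        2 * (Real.log d + 1) / h :=
  discreteDeriv_norm_le_general g h hh d
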